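/- Let G be a partial cube and E_i a Θ-class of G. If the half-carriers N⁺(E_i) and N⁻(E_i) are isometric subgraphs of G, then the carrier N(E_i) and the extended halfspaces G_i⁺ ∪ N⁻(E_i) and G_i⁻ ∪ N⁺(E_i) are isometric subgraphs of G. -/

import Mathlib

open Finset

/-- The hypercube graph on subsets of `Fin m`. -/
def cubeGraph (m : ℕ) : SimpleGraph (Finset (Fin m)) where
  Adj A B := (symmDiff A B).card = 1
  symm := ⟨fun A B h => by show (symmDiff B A).card = 1; rwa [symmDiff_comm]⟩
  loopless := ⟨fun A h => by simp only [symmDiff_self, bot_eq_empty, card_empty] at h; exact absurd h (by norm_num)⟩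

/-- `V` is (the vertex set of) a partial cube isometrically embedded in `Q_m`:
the distance in the induced subgraph equals the Hamming distance. -/
def IsPC {m : ℕ} (V : Set (Finset (Fin m))) : Prop :=
  ∀ u v : V, ((cubeGraph m).induce V).dist u v = (symmDiff u.1 v.1).card

def Shatters {m : ℕ} (V : Set (Finset (Fin m))) (Y : Finset (Fin m)) : Prop :=
  ∀ Z ⊆ Y, ∃ B ∈ V, B ∩ Y = Z

def VCdimLE {m : ℕ} (V : Set (Finset (Fin m))) (d : ℕ) : Prop :=
  ∀ Y : Finset (Fin m), Shatters V Y → Y.card ≤ d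

inductive PCStep {m : ℕ} : Set (Finset (Fin m)) → Set (Finset (Fin m)) → Prop
  | contract (i : Fin m) (V : Set (Finset (Fin m))) :
      PCStep V ((fun B => B.erase i) '' V)
  | restrictPos (i : Fin m) (V : Set (Finset (Fin m))) :
      PCStep V {B ∈ V | i ∈ B}
  | restrictNeg (i : Fin m) (V : Set (Finset (Fin m))) :
      PCStep V {B ∈ V | i ∉ B}

/-- Partial-cube minor relation: a sequence of contractions and restrictions. -/
def PCMinor {m : ℕ} : Set (Finset (Fin m)) → Set (Finset (Fin m)) → Prop :=
  Relation.ReflTransGen PCStep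

/-- `W` is (the vertex set of) a `k`-dimensional subcube of `Q_m`. -/
def IsCubeFam {m : ℕ} (k : ℕ) (W : Set (Finset (Fin m))) : Prop :=
  ∃ (Y X : Finset (Fin m)), Disjoint Y X ∧ X.card = k ∧
    W = {B | ∃ Z ⊆ X, B = Y ∪ Z}

/-- `G` has the cube `Q_k` as a pc-minor. -/
def HasQMinor {m : ℕ} (V : Set (Finset (Fin m))) (k : ℕ) : Prop :=
  ∃ W, PCMinor V W ∧ IsCubeFam k W

def hdist {m : ℕ} (A B : Finset (Fin m)) : ℕ := (symmDiff A B).card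

def IsConvexIn {m : ℕ} (V S : Set (Finset (Fin m))) : Prop :=
  S ⊆ V ∧ ∀ u ∈ S, ∀ v ∈ S, ∀ x ∈ V, hdist u x + hdist x v = hdist u v → x ∈ S

def convexHullIn {m : ℕ} (V S : Set (Finset (Fin m))) : Set (Finset (Fin m)) :=
  ⋂₀ {T | S ⊆ T ∧ IsConvexIn V T}

def IsGatedIn {m : ℕ} (V S : Set (Finset (Fin m))) : Prop :=
  S ⊆ V ∧ ∀ x ∈ V, ∃ g ∈ S, ∀ y ∈ S, hdist x g + hdist g y = hdist x y

/-- The standardly embedded full subdivision `SK_n` in `Q_n`: singletons and pairs. -/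
def SKset (n : ℕ) : Set (Finset (Fin n)) := {B | B.card = 1 ∨ B.card = 2}

/-- A standardly embedded copy of `SK_n` in `Q_m` along the injection `ι`. -/
def skCopy {m : ℕ} (n : ℕ) (ι : Fin n → Fin m) : Set (Finset (Fin m)) :=
  (fun B => B.image ι) '' SKset n


def IsConvexCycle {m : ℕ} (V C : Set (Finset (Fin m))) : Prop :=
  IsConvexIn V C ∧ ∃ k, 3 ≤ k ∧
    Nonempty (((cubeGraph m).induce C) ≃g SimpleGraph.cycleGraph k)

/-- `C` is crossed by the Θ-class `E_i`. -/
def CrossedBy {m : ℕ} (i : Fin m) (C : Set (Finset (Fin m))) : Prop :=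
  ∃ B, i ∉ B ∧ B ∈ C ∧ insert i B ∈ C

/-- The carrier `N(E_i)`: union of all cells (edges of `E_i` and convex cycles)
crossed by `E_i`. -/
def carrier {m : ℕ} (V : Set (Finset (Fin m))) (i : Fin m) : Set (Finset (Fin m)) :=
  {B ∈ V | ((i ∉ B ∧ insert i B ∈ V) ∨ (i ∈ B ∧ B.erase i ∈ V)) ∨
    ∃ C, IsConvexCycle V C ∧ CrossedBy i C ∧ B ∈ C}

/-! A geodesic of `G` between the two halfspaces of `E_i` crosses `E_i` along an edge
`a — a \ {i}` whose ends lie in the carrier, hence in the two half-carriers.  So a pair of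
vertices on opposite sides of `E_i` is joined inside the carrier (or inside an extended
halfspace) by a geodesic of a half-carrier, that edge, and a geodesic of the other
half-carrier (or of the halfspace, which is convex); the lengths add up because the three
pieces sit on one geodesic of `G`. -/

open SimpleGraph

section Hamming

variable {m : ℕ}

@[simp] lemma hdist_self (A : Finset (Fin m)) : hdist A A = 0 := by simp [hdist]

lemma hdist_comm (A B : Finset (Fin m)) : hdist A B = hdist B A := by
  rw [hdist, hdist, symmDiff_comm]

lemma hdist_eq_zero_iff {A B : Finset (Fin m)} : hdist A B = 0 ↔ A = B := by
  simp [hdist]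

lemma hdist_triangle (A B C : Finset (Fin m)) : hdist A C ≤ hdist A B + hdist B C :=
  (card_le_card (symmDiff_triangle A B C)).trans (card_union_le _ _)

lemma hdist_erase {i : Fin m} {A : Finset (Fin m)} (hi : i ∈ A) : hdist A (A.erase i) = 1 := by
  rw [hdist, card_eq_one]
  exact ⟨i, by ext j; by_cases hj : j = i <;> simp [mem_symmDiff, hj, hi]⟩

lemma eq_erase_of_hdist_eq_one {i : Fin m} {A B : Finset (Fin m)} (h : hdist A B = 1)
    (hA : i ∈ A) (hB : i ∉ B) : B = A.erase i := by
  obtain ⟨j, hj⟩ := card_eq_one.mp h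
  have hji : j = i := by
    have hi : i ∈ symmDiff A B := mem_symmDiff.mpr (Or.inl ⟨hA, hB⟩)
    rw [hj, mem_singleton] at hi
    exact hi.symm
  subst hji
  ext k
  have hk := Finset.ext_iff.mp hj k
  simp only [mem_symmDiff, mem_singleton, mem_erase] at hk ⊢
  by_cases hkj : k = j
  · subst hkj; simp [hB]
  · tauto

lemma mem_iff_of_hdist_add_eq {x y z : Finset (Fin m)} {j : Fin m}
    (hz : hdist x z + hdist z y = hdist x y) (hxy : j ∈ x ↔ j ∈ y) : j ∈ z ↔ j ∈ x := by
  -- otherwise `j` lies in both `x ∆ z` and `z ∆ y` but not in `x ∆ y`, so the sum is too big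
  by_contra hj
  have hjxz : j ∈ symmDiff x z := by rw [mem_symmDiff]; tauto
  have hjzy : j ∈ symmDiff z y := by rw [mem_symmDiff]; tauto
  have hsub : symmDiff x y ⊆ (symmDiff x z ∪ symmDiff z y).erase j := by
    intro k hk
    rw [mem_erase]
    refine ⟨fun hkj => ?_, symmDiff_triangle x z y hk⟩
    subst hkj
    rw [mem_symmDiff] at hk
    tauto
  have hcard := (card_le_card hsub).trans_eq
    (card_erase_of_mem (mem_union_left _ hjxz))
  have hunion := card_union_le (symmDiff x z) (symmDiff z y)
  have hpos := card_pos.mpr ⟨j, hjzy⟩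
  unfold hdist at hz
  omega

end Hamming

section Geodesics

variable {m : ℕ}

lemma hdist_le_length {S : Set (Finset (Fin m))} {u v : S}
    (w : ((cubeGraph m).induce S).Walk u v) : hdist u.1 v.1 ≤ w.length := by
  induction w with
  | nil => simp
  | @cons a b c hab w ih =>
    have hab' : hdist a.1 b.1 = 1 := hab
    have := hdist_triangle a.1 b.1 c.1
    rw [Walk.length_cons]
    omega

-- `≤` suffices: no walk is shorter than the Hamming distance (`hdist_le_length`).
def GeodesicIn (S : Set (Finset (Fin m))) (x y : Finset (Fin m)) : Prop :=
  ∃ (hx : x ∈ S) (hy : y ∈ S) (w : ((cubeGraph m).induce S).Walk ⟨x, hx⟩ ⟨y, hy⟩),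
    w.length ≤ hdist x y

namespace GeodesicIn

variable {S T : Set (Finset (Fin m))} {x y z : Finset (Fin m)}

lemma left_mem (h : GeodesicIn S x y) : x ∈ S := h.1

lemma right_mem (h : GeodesicIn S x y) : y ∈ S := h.2.1

lemma refl (hx : x ∈ S) : GeodesicIn S x x := ⟨hx, hx, .nil, by simp⟩

lemma of_hdist_eq_one (hx : x ∈ S) (hy : y ∈ S) (h : hdist x y = 1) : GeodesicIn S x y :=
  ⟨hx, hy, .cons (show ((cubeGraph m).induce S).Adj ⟨x, hx⟩ ⟨y, hy⟩ from h) .nil, by simp [h]⟩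

lemma symm (h : GeodesicIn S x y) : GeodesicIn S y x := by
  obtain ⟨hx, hy, w, hw⟩ := h
  exact ⟨hy, hx, w.reverse, by rw [Walk.length_reverse, hdist_comm]; exact hw⟩

lemma trans (hxy : GeodesicIn S x y) (hyz : GeodesicIn S y z)
    (h : hdist x y + hdist y z ≤ hdist x z) : GeodesicIn S x z := by
  obtain ⟨hx, hy, w₁, hw₁⟩ := hxy
  obtain ⟨_, hz, w₂, hw₂⟩ := hyz
  exact ⟨hx, hz, w₁.append w₂, by rw [Walk.length_append]; omega⟩

lemma mono (h : GeodesicIn S x y) (hST : S ⊆ T) : GeodesicIn T x y := by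
  obtain ⟨hx, hy, w, hw⟩ := h
  exact ⟨hST hx, hST hy, w.map ((cubeGraph m).induceHomOfLE hST).toHom, (Walk.length_map _ _).trans_le hw⟩

end GeodesicIn

lemma isPC_iff_geodesicIn {S : Set (Finset (Fin m))} :
    IsPC S ↔ ∀ x ∈ S, ∀ y ∈ S, GeodesicIn S x y := by
  constructor
  · intro hS x hx y hy
    have hd := hS ⟨x, hx⟩ ⟨y, hy⟩
    have hr : ((cubeGraph m).induce S).Reachable ⟨x, hx⟩ ⟨y, hy⟩ := by
      by_contra hnr
      rw [dist_eq_zero_of_not_reachable hnr] at hd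
      obtain rfl : x = y := hdist_eq_zero_iff.mp hd.symm
      exact hnr (Reachable.refl _)
    obtain ⟨w, hw⟩ := hr.exists_walk_length_eq_dist
    exact ⟨hx, hy, w, (hw.trans hd).le⟩
  · rintro h ⟨x, hx⟩ ⟨y, hy⟩
    obtain ⟨_, _, w, hw⟩ := h x hx y hy
    obtain ⟨w', hw'⟩ := w.reachable.exists_walk_length_eq_dist
    exact le_antisymm ((dist_le w).trans hw) (hw' ▸ hdist_le_length w')

lemma isPC_union {A B : Set (Finset (Fin m))} (hA : IsPC A) (hB : IsPC B)
    (hAB : ∀ x ∈ A, ∀ y ∈ B, GeodesicIn (A ∪ B) x y) : IsPC (A ∪ B) := by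
  rw [isPC_iff_geodesicIn] at hA hB ⊢
  rintro x (hx | hx) y (hy | hy)
  · exact (hA x hx y hy).mono Set.subset_union_left
  · exact hAB x hx y hy
  · exact (hAB y hy x hx).symm
  · exact (hB x hx y hy).mono Set.subset_union_right

end Geodesics

namespace IsPC

variable {m : ℕ} {V : Set (Finset (Fin m))}

lemma exists_step (hV : IsPC V) {x y : Finset (Fin m)} (hx : x ∈ V) (hy : y ∈ V)
    (hxy : x ≠ y) :
    ∃ x' ∈ V, hdist x x' = 1 ∧ hdist x' y + 1 = hdist x y := by
  obtain ⟨_, _, w, hw⟩ := isPC_iff_geodesicIn.mp hV x hx y hy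
  cases w with
  | nil => exact absurd rfl hxy
  | @cons _ x' _ hxx' w' =>
    have hxx'' : hdist x x'.1 = 1 := hxx'
    have hx'y : hdist x'.1 y ≤ w'.length := hdist_le_length w'
    have := hdist_triangle x x'.1 y
    rw [Walk.length_cons] at hw
    exact ⟨x'.1, x'.2, hxx'', by omega⟩

lemma geodesicIn_of_isConvexIn {T : Set (Finset (Fin m))} (hV : IsPC V) (hT : IsConvexIn V T)
    {x y : Finset (Fin m)} (hx : x ∈ T) (hy : y ∈ T) : GeodesicIn T x y := by
  by_cases hxy : x = y
  · subst hxy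
    exact .refl hx
  obtain ⟨x', hx'V, hxx', hx'y⟩ := hV.exists_step (hT.1 hx) (hT.1 hy) hxy
  have hx'T : x' ∈ T := hT.2 x hx y hy x' hx'V (by omega)
  exact (GeodesicIn.of_hdist_eq_one hx hx'T hxx').trans
    (hV.geodesicIn_of_isConvexIn hT hx'T hy) (by omega)
termination_by hdist x y
decreasing_by omega

lemma of_isConvexIn {T : Set (Finset (Fin m))} (hV : IsPC V) (hT : IsConvexIn V T) : IsPC T :=
  isPC_iff_geodesicIn.mpr fun _ hx _ hy => hV.geodesicIn_of_isConvexIn hT hx hy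

lemma exists_crossing (hV : IsPC V) {i : Fin m} {x y : Finset (Fin m)} (hx : x ∈ V)
    (hy : y ∈ V) (hxi : i ∈ x) (hyi : i ∉ y) :
    ∃ a ∈ V, i ∈ a ∧ a.erase i ∈ V ∧ hdist x a + 1 + hdist (a.erase i) y ≤ hdist x y := by
  have hxy : x ≠ y := fun h => hyi (h ▸ hxi)
  obtain ⟨x', hx'V, hxx', hx'y⟩ := hV.exists_step hx hy hxy
  by_cases hx'i : i ∈ x'
  · obtain ⟨a, haV, hai, hbV, ha⟩ := hV.exists_crossing hx'V hy hx'i hyi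
    have := hdist_triangle x x' a
    exact ⟨a, haV, hai, hbV, by omega⟩
  · rw [eq_erase_of_hdist_eq_one hxx' hxi hx'i] at hx'V hx'y
    exact ⟨x, hx, hxi, hx'V, by simp only [hdist_self]; omega⟩
termination_by hdist x y
decreasing_by omega

lemma isPC_union_of_crossing (hV : IsPC V) {i : Fin m} {A B : Set (Finset (Fin m))}
    (hA : IsPC A) (hB : IsPC B) (hAV : A ⊆ {a ∈ V | i ∈ a}) (hBV : B ⊆ {b ∈ V | i ∉ b})
    (hcross : ∀ a ∈ V, i ∈ a → a.erase i ∈ V → a ∈ A ∧ a.erase i ∈ B) : IsPC (A ∪ B) := by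
  refine isPC_union hA hB fun x hx y hy => ?_
  obtain ⟨hxV, hxi⟩ := hAV hx
  obtain ⟨hyV, hyi⟩ := hBV hy
  obtain ⟨a, haV, hai, hbV, ha⟩ := hV.exists_crossing hxV hyV hxi hyi
  obtain ⟨haA, hbB⟩ := hcross a haV hai hbV
  have hxa := (isPC_iff_geodesicIn.mp hA x hx a haA).mono (Set.subset_union_left (t := B))
  have hby := (isPC_iff_geodesicIn.mp hB _ hbB y hy).mono (Set.subset_union_right (s := A))
  have hab := GeodesicIn.of_hdist_eq_one hxa.right_mem hby.left_mem (hdist_erase hai)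
  have hxay := hdist_triangle x a y
  have hayb : hdist a y ≤ 1 + hdist (a.erase i) y :=
    hdist_erase hai ▸ hdist_triangle a (a.erase i) y
  have hay : GeodesicIn (A ∪ B) a y := hab.trans hby (by rw [hdist_erase hai]; omega)
  exact hxa.trans hay (by omega)

end IsPC

section Carrier

variable {m : ℕ} {V : Set (Finset (Fin m))} {i : Fin m} {a : Finset (Fin m)}

lemma isConvexIn_setOf_mem (V : Set (Finset (Fin m))) (i : Fin m) :
    IsConvexIn V {B ∈ V | i ∈ B} :=
  ⟨fun _ h => h.1, fun _ hu _ hv _ hzV hz =>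
    ⟨hzV, (mem_iff_of_hdist_add_eq hz (iff_of_true hu.2 hv.2)).mpr hu.2⟩⟩

lemma isConvexIn_setOf_notMem (V : Set (Finset (Fin m))) (i : Fin m) :
    IsConvexIn V {B ∈ V | i ∉ B} :=
  ⟨fun _ h => h.1, fun _ hu _ hv _ hzV hz =>
    ⟨hzV, fun hi => hu.2 ((mem_iff_of_hdist_add_eq hz (iff_of_false hu.2 hv.2)).mp hi)⟩⟩

lemma mem_carrier_of_erase_mem (ha : a ∈ V) (hi : i ∈ a) (hb : a.erase i ∈ V) :
    a ∈ carrier V i :=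
  ⟨ha, Or.inl (Or.inr ⟨hi, hb⟩)⟩

lemma erase_mem_carrier (ha : a ∈ V) (hi : i ∈ a) (hb : a.erase i ∈ V) :
    a.erase i ∈ carrier V i :=
  ⟨hb, Or.inl (Or.inl ⟨notMem_erase i a, by rwa [insert_erase hi]⟩)⟩

end Carrier

/-- If the half-carriers of a Θ-class of a partial cube are isometric subgraphs,
then so are the carrier and the two extended halfspaces. -/
theorem stmt18 (m : ℕ) (i : Fin m) (V : Set (Finset (Fin m))) (hV : IsPC V)
    (hplus : IsPC (carrier V i ∩ {B | i ∈ B}))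
    (hminus : IsPC (carrier V i ∩ {B | i ∉ B})) :
    IsPC (carrier V i) ∧
      IsPC ({B ∈ V | i ∈ B} ∪ (carrier V i ∩ {B | i ∉ B})) ∧
      IsPC ({B ∈ V | i ∉ B} ∪ (carrier V i ∩ {B | i ∈ B})) := by
  have hNplus : carrier V i ∩ {B | i ∈ B} ⊆ {B ∈ V | i ∈ B} := fun _ h => ⟨h.1.1, h.2⟩
  have hNminus : carrier V i ∩ {B | i ∉ B} ⊆ {B ∈ V | i ∉ B} := fun _ h => ⟨h.1.1, h.2⟩
  refine ⟨?_, ?_, ?_⟩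
  · rw [← Set.inter_union_compl (carrier V i) {B | i ∈ B}]
    exact hV.isPC_union_of_crossing hplus hminus hNplus hNminus fun a ha hi hb =>
      ⟨⟨mem_carrier_of_erase_mem ha hi hb, hi⟩, ⟨erase_mem_carrier ha hi hb, notMem_erase i a⟩⟩
  · exact hV.isPC_union_of_crossing (hV.of_isConvexIn (isConvexIn_setOf_mem V i)) hminus
      subset_rfl hNminus fun a ha hi hb =>
      ⟨⟨ha, hi⟩, ⟨erase_mem_carrier ha hi hb, notMem_erase i a⟩⟩
  · rw [Set.union_comm]
    exact hV.isPC_union_of_crossing hplus (hV.of_isConvexIn (isConvexIn_setOf_notMem V i))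
      hNplus subset_rfl fun a ha hi hb =>
      ⟨⟨mem_carrier_of_erase_mem ha hi hb, hi⟩, ⟨hb, notMem_erase i a⟩⟩
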